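/- arXiv:1406.2454 — 5 statements merged into one kernel-verified Lean document; each statement's English description precedes it below -/
import Mathlib

section
/- If the points p₁, …, p_N ∈ ℝ² are not all equal and vᵢ > 0 for all i, then the zero-time plane P = ℝ² × {0} and the intersection ⋂ᵢ Cᵢ of the cones Cᵢ = {(x,t) : t ≥ ‖x - pᵢ‖/vᵢ} are disjoint, and the distance between them is strictly positive. -/
/-! If `(x, t)` lies in every cone, then `‖pᵢ - pⱼ‖ ≤ ‖x - pᵢ‖ + ‖x - pⱼ‖ ≤ (vᵢ + vⱼ) t`, so the time
coordinate of the intersection is bounded below by `‖pᵢ - pⱼ‖ / (vᵢ + vⱼ) > 0`; this bound also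
bounds the distance to the plane `t = 0`, since the distance dominates the gap in time. -/

lemma norm_sub_div_add_le_of_div_le {E : Type*} [SeminormedAddCommGroup E] {a b x : E}
    {va vb t : ℝ} (ha : 0 < va) (hb : 0 < vb) (hta : ‖x - a‖ / va ≤ t)
    (htb : ‖x - b‖ / vb ≤ t) : ‖a - b‖ / (va + vb) ≤ t := by
  rw [div_le_iff₀ ha] at hta
  rw [div_le_iff₀ hb] at htb
  rw [div_le_iff₀ (add_pos ha hb)]
  calc ‖a - b‖ ≤ ‖x - a‖ + ‖x - b‖ := by
        simpa only [dist_eq_norm] using dist_triangle_left a b x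
    _ ≤ t * (va + vb) := by linarith

section Cones

variable {ι E : Type*} [SeminormedAddCommGroup E] (p : ι → E) (v : ι → ℝ)

lemma le_snd_of_mem_iInter_cones (hv : ∀ i, 0 < v i) (i j : ι) {z : WithLp 2 (E × ℝ)}
    (hz : z ∈ ⋂ i, {z : WithLp 2 (E × ℝ) | ‖z.ofLp.1 - p i‖ / v i ≤ z.ofLp.2}) :
    ‖p i - p j‖ / (v i + v j) ≤ z.ofLp.2 := by
  rw [Set.mem_iInter] at hz
  exact norm_sub_div_add_le_of_div_le (hv i) (hv j) (hz i) (hz j)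

lemma iInter_cones_nonempty [Finite ι] (x : E) :
    (⋂ i, {z : WithLp 2 (E × ℝ) | ‖z.ofLp.1 - p i‖ / v i ≤ z.ofLp.2}).Nonempty := by
  obtain ⟨T, hT⟩ := Finite.exists_le fun i ↦ ‖x - p i‖ / v i
  exact ⟨WithLp.toLp 2 (x, T), Set.mem_iInter.mpr hT⟩

end Cones

lemma le_csInf_dist {α : Type*} [PseudoMetricSpace α] {s t : Set α} {c : ℝ}
    (hs : s.Nonempty) (ht : t.Nonempty) (h : ∀ a ∈ s, ∀ b ∈ t, c ≤ dist a b) :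
    c ≤ sInf {d : ℝ | ∃ a ∈ s, ∃ b ∈ t, d = dist a b} := by
  obtain ⟨a, ha⟩ := hs
  obtain ⟨b, hb⟩ := ht
  refine le_csInf ⟨dist a b, a, ha, b, hb, rfl⟩ ?_
  rintro d ⟨a, ha, b, hb, rfl⟩
  exact h a ha b hb

theorem stmt_5_general {ι : Type*} [Fintype ι]
    (p : ι → EuclideanSpace ℝ (Fin 2)) (v : ι → ℝ) (hv : ∀ i, 0 < v i)
    (hne : ∃ i j, p i ≠ p j) :
    Disjoint {z : WithLp 2 (EuclideanSpace ℝ (Fin 2) × ℝ) | z.ofLp.2 = 0}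
      (⋂ i, {z : WithLp 2 (EuclideanSpace ℝ (Fin 2) × ℝ) | ‖z.ofLp.1 - p i‖ / v i ≤ z.ofLp.2}) ∧
    0 < sInf {d : ℝ | ∃ a ∈ {z : WithLp 2 (EuclideanSpace ℝ (Fin 2) × ℝ) | z.ofLp.2 = 0},
        ∃ b ∈ ⋂ i, {z : WithLp 2 (EuclideanSpace ℝ (Fin 2) × ℝ) | ‖z.ofLp.1 - p i‖ / v i ≤ z.ofLp.2},
        d = dist a b} := by
  obtain ⟨i, j, hij⟩ := hne
  set c := ‖p i - p j‖ / (v i + v j)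
  have hc : 0 < c := div_pos (norm_pos_iff.mpr (sub_ne_zero.mpr hij)) (add_pos (hv i) (hv j))
  have htime := fun z (hz : z ∈ _) ↦ le_snd_of_mem_iInter_cones p v hv i j hz
  refine ⟨Set.disjoint_left.mpr fun z (hz₀ : z.ofLp.2 = 0) hz ↦ ?_, hc.trans_le ?_⟩
  · linarith [htime z hz]
  refine le_csInf_dist ⟨WithLp.toLp 2 (0, 0), rfl⟩ (iInter_cones_nonempty p v 0) ?_
  intro a (ha : a.ofLp.2 = 0) b hb
  calc c ≤ |a.ofLp.2 - b.ofLp.2| := by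
        rw [ha, zero_sub, abs_neg]
        exact (htime b hb).trans (le_abs_self _)
    _ ≤ dist a b := WithLp.dist_snd_le a b

theorem stmt_5 {ι : Type*} [Fintype ι] [Nonempty ι]
    (p : ι → EuclideanSpace ℝ (Fin 2)) (v : ι → ℝ) (hv : ∀ i, 0 < v i)
    (hne : ∃ i j, p i ≠ p j) :
    Disjoint {z : WithLp 2 (EuclideanSpace ℝ (Fin 2) × ℝ) | z.ofLp.2 = 0}
      (⋂ i, {z : WithLp 2 (EuclideanSpace ℝ (Fin 2) × ℝ) | ‖z.ofLp.1 - p i‖ / v i ≤ z.ofLp.2}) ∧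
    0 < sInf {d : ℝ | ∃ a ∈ {z : WithLp 2 (EuclideanSpace ℝ (Fin 2) × ℝ) | z.ofLp.2 = 0},
        ∃ b ∈ ⋂ i, {z : WithLp 2 (EuclideanSpace ℝ (Fin 2) × ℝ) | ‖z.ofLp.1 - p i‖ / v i ≤ z.ofLp.2},
        d = dist a b} :=
  stmt_5_general p v hv hne
end

section
/- If the points p₁, …, p_N ∈ ℝ² are not all equal, then the function x ↦ maxᵢ ‖x - pᵢ‖/vᵢ has a unique minimizer on ℝ². -/
/-!
Existence: the rendezvous time is continuous and at least `‖x - pᵢ‖ / vᵢ`, so it is coercive and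
attains its minimum on a proper space. Uniqueness: its sublevel set at level `t` is the
intersection of the closed balls `closedBall pᵢ (t vᵢ)`. In a strictly convex space the midpoint
of two distinct points of such a ball lies in the open ball, so the midpoint of two distinct
minimizers would have a strictly smaller rendezvous time.
-/

open Filter Metric Finset

section RendezvousTime

variable {ι E : Type*} [Fintype ι] [Nonempty ι] [NormedAddCommGroup E]

noncomputable def rendezvousTime (p : ι → E) (v : ι → ℝ) (x : E) : ℝ :=
  univ.sup' univ_nonempty fun i => ‖x - p i‖ / v i

variable {p : ι → E} {v : ι → ℝ}

theorem div_le_rendezvousTime (x : E) (i : ι) : ‖x - p i‖ / v i ≤ rendezvousTime p v x :=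
  le_sup' (fun i => ‖x - p i‖ / v i) (mem_univ i)

theorem continuous_rendezvousTime : Continuous (rendezvousTime p v) :=
  Continuous.finset_sup'_apply _ fun _ _ => (continuous_id.sub continuous_const).norm.div_const _

theorem rendezvousTime_le_iff (hv : ∀ i, 0 < v i) {x : E} {t : ℝ} :
    rendezvousTime p v x ≤ t ↔ ∀ i, x ∈ closedBall (p i) (t * v i) := by
  simp only [rendezvousTime, sup'_le_iff, mem_univ, true_implies, mem_closedBall, dist_eq_norm]
  exact forall_congr' fun i => div_le_iff₀ (hv i)

theorem rendezvousTime_lt_iff (hv : ∀ i, 0 < v i) {x : E} {t : ℝ} :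
    rendezvousTime p v x < t ↔ ∀ i, x ∈ ball (p i) (t * v i) := by
  simp only [rendezvousTime, sup'_lt_iff, mem_univ, true_implies, mem_ball, dist_eq_norm]
  exact forall_congr' fun i => div_lt_iff₀ (hv i)

theorem tendsto_rendezvousTime_cocompact [ProperSpace E] (hv : ∀ i, 0 < v i) :
    Tendsto (rendezvousTime p v) (cocompact E) atTop := by
  obtain ⟨i⟩ := ‹Nonempty ι›
  have hdist : Tendsto (fun x => ‖x - p i‖ / v i) (cocompact E) atTop := by
    simpa only [dist_eq_norm] using (tendsto_dist_right_cocompact_atTop (p i)).atTop_div_const (hv i)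
  exact tendsto_atTop_mono (fun x => div_le_rendezvousTime x i) hdist

theorem exists_forall_rendezvousTime_le [ProperSpace E] (hv : ∀ i, 0 < v i) :
    ∃ x, ∀ y, rendezvousTime p v x ≤ rendezvousTime p v y :=
  continuous_rendezvousTime.exists_forall_le (tendsto_rendezvousTime_cocompact hv)

theorem rendezvousTime_combo_lt_max [NormedSpace ℝ E] [StrictConvexSpace ℝ E]
    (hv : ∀ i, 0 < v i) {x y : E} (hxy : x ≠ y) {a b : ℝ} (ha : 0 < a) (hb : 0 < b) (hab : a + b = 1) :
    rendezvousTime p v (a • x + b • y) < max (rendezvousTime p v x) (rendezvousTime p v y) := by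
  set t := max (rendezvousTime p v x) (rendezvousTime p v y)
  have hx := (rendezvousTime_le_iff hv).1 (le_max_left _ _ : rendezvousTime p v x ≤ t)
  have hy := (rendezvousTime_le_iff hv).1 (le_max_right _ _ : rendezvousTime p v y ≤ t)
  exact (rendezvousTime_lt_iff hv).2 fun i => combo_mem_ball_of_ne (hx i) (hy i) hxy ha hb hab

theorem eq_of_forall_rendezvousTime_le [NormedSpace ℝ E] [StrictConvexSpace ℝ E]
    (hv : ∀ i, 0 < v i) {x y : E}
    (hx : ∀ z, rendezvousTime p v x ≤ rendezvousTime p v z)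
    (hy : ∀ z, rendezvousTime p v y ≤ rendezvousTime p v z) : x = y := by
  by_contra hxy
  have hmid := rendezvousTime_combo_lt_max (p := p) hv hxy one_half_pos one_half_pos (add_halves 1)
  rw [max_eq_left (hy x)] at hmid
  exact (hx _).not_gt hmid

end RendezvousTime

theorem stmt_7_general {ι : Type*} [Fintype ι] [Nonempty ι]
    (p : ι → EuclideanSpace ℝ (Fin 2)) (v : ι → ℝ) (hv : ∀ i, 0 < v i) :
    ∃! xstar : EuclideanSpace ℝ (Fin 2), ∀ x : EuclideanSpace ℝ (Fin 2),
      Finset.univ.sup' Finset.univ_nonempty (fun i => ‖xstar - p i‖ / v i)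
        ≤ Finset.univ.sup' Finset.univ_nonempty (fun i => ‖x - p i‖ / v i) := by
  obtain ⟨xstar, hmin⟩ := exists_forall_rendezvousTime_le (p := p) hv
  exact ⟨xstar, hmin, fun y hy => eq_of_forall_rendezvousTime_le hv hy hmin⟩

theorem stmt_7 {ι : Type*} [Fintype ι] [Nonempty ι]
    (p : ι → EuclideanSpace ℝ (Fin 2)) (v : ι → ℝ) (hv : ∀ i, 0 < v i)
    (hne : ∃ i j, p i ≠ p j) :
    ∃! xstar : EuclideanSpace ℝ (Fin 2), ∀ x : EuclideanSpace ℝ (Fin 2),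
      Finset.univ.sup' Finset.univ_nonempty (fun i => ‖xstar - p i‖ / v i)
        ≤ Finset.univ.sup' Finset.univ_nonempty (fun i => ‖x - p i‖ / v i) :=
  stmt_7_general p v hv
end

section
/- Let A, B ⊆ ℝⁿ be nonempty closed convex sets with A ∩ B ≠ ∅. Define sequences by a₁ = P_A(x₀), bₙ = P_B(aₙ), aₙ₊₁ = P_A(bₙ) for any x₀ ∈ ℝⁿ, where P_A, P_B are metric projections. Then both (aₙ) and (bₙ) converge to a common point x* ∈ A ∩ B. -/
/-!
For a nearest point `p` of a closed convex set `K` to `x` and any `z ∈ K`, the obtuse angle at `p`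
gives `‖p - z‖² + ‖x - p‖² ≤ ‖x - z‖²`. Hence the distance from `aₖ` to any point of `A ∩ B`
decreases, and the decrease of the squared distance dominates `‖aₖ - bₖ‖²`, so `aₖ - bₖ → 0`.
A cluster point of the bounded sequence `(aₖ)` is then also one of `(bₖ)` and lies in `A ∩ B`;
since the distance of `aₖ` to it decreases, the whole sequence converges to it.
-/

open Filter Topology

section NearestPoint

variable {E : Type*} [NormedAddCommGroup E] [InnerProductSpace ℝ E] {K : Set E} {x p z : E}

theorem Convex.dist_sq_add_dist_sq_le_of_forall_dist_le (hK : Convex ℝ K) (hp : p ∈ K) (hz : z ∈ K)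
    (hmin : ∀ w ∈ K, dist x p ≤ dist x w) :
    dist p z ^ 2 + dist x p ^ 2 ≤ dist x z ^ 2 := by
  have hinner : inner ℝ (x - p) (z - p) ≤ 0 := by
    refine (norm_eq_iInf_iff_real_inner_le_zero hK hp).1 ?_ z hz
    have : Nonempty K := ⟨⟨p, hp⟩⟩
    refine le_antisymm (le_ciInf fun w => ?_)
      (ciInf_le (f := fun w : K => ‖x - w‖) ⟨0, ?_⟩ ⟨p, hp⟩)
    · simpa only [dist_eq_norm] using hmin w w.2
    · rintro _ ⟨w, rfl⟩
      positivity
  have hsplit : x - z = (x - p) - (z - p) := by abel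
  rw [dist_eq_norm p, dist_eq_norm x p, dist_eq_norm x z, hsplit, norm_sub_sq_real (x - p),
    ← norm_neg (p - z), neg_sub]
  linarith

theorem Convex.dist_le_of_forall_dist_le (hK : Convex ℝ K) (hp : p ∈ K) (hz : z ∈ K)
    (hmin : ∀ w ∈ K, dist x p ≤ dist x w) :
    dist p z ≤ dist x z := by
  have := hK.dist_sq_add_dist_sq_le_of_forall_dist_le hp hz hmin
  exact (pow_le_pow_iff_left₀ dist_nonneg dist_nonneg two_ne_zero).1
    (by linarith [sq_nonneg (dist x p)])

end NearestPoint

theorem tendsto_atTop_of_antitone_dist_of_mem_closure_range {α : Type*} [PseudoMetricSpace α]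
    {u : ℕ → α} {x : α} (hanti : Antitone fun k => dist (u k) x)
    (hx : x ∈ closure (Set.range u)) : Tendsto u atTop (𝓝 x) := by
  refine Metric.tendsto_atTop.2 fun ε hε => ?_
  obtain ⟨N, hN⟩ := Metric.mem_closure_range_iff.1 hx ε hε
  exact ⟨N, fun k hk => (hanti hk).trans_lt ((dist_comm _ _).trans_lt hN)⟩

theorem tendsto_zero_of_nonneg_of_le_sub_succ {d e : ℕ → ℝ} (hd : BddBelow (Set.range d))
    (he₀ : ∀ k, 0 ≤ e k) (he : ∀ k, e k ≤ d k - d (k + 1)) : Tendsto e atTop (𝓝 0) := by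
  have hanti : Antitone d := antitone_nat_of_succ_le fun k => by linarith [he₀ k, he k]
  have hlim := tendsto_atTop_ciInf hanti hd
  have hdiff : Tendsto (fun k => d k - d (k + 1)) atTop (𝓝 0) := by
    simpa using hlim.sub (hlim.comp (tendsto_add_atTop_nat 1))
  exact tendsto_of_tendsto_of_tendsto_of_le_of_le tendsto_const_nhds hdiff he₀ he

theorem stmt_8_general {n : ℕ} (A B : Set (EuclideanSpace ℝ (Fin n)))
    (hA : IsClosed A) (hB : IsClosed B) (hAc : Convex ℝ A) (hBc : Convex ℝ B)
    (hAB : (A ∩ B).Nonempty)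
    (PA PB : EuclideanSpace ℝ (Fin n) → EuclideanSpace ℝ (Fin n))
    (hPA : ∀ x, PA x ∈ A ∧ ∀ w ∈ A, dist x (PA x) ≤ dist x w)
    (hPB : ∀ x, PB x ∈ B ∧ ∀ w ∈ B, dist x (PB x) ≤ dist x w)
    (a b : ℕ → EuclideanSpace ℝ (Fin n))
    (hb : ∀ k, b k = PB (a k))
    (ha : ∀ k, a (k + 1) = PA (b k)) :
    ∃ xstar ∈ A ∩ B, Tendsto a atTop (𝓝 xstar) ∧ Tendsto b atTop (𝓝 xstar) := by
  have hbB : ∀ k, b k ∈ B := fun k => hb k ▸ (hPB _).1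
  have haA : ∀ᶠ k in atTop, a k ∈ A := eventually_atTop.2 ⟨1, fun k hk => by
    obtain ⟨m, rfl⟩ := Nat.exists_eq_add_of_le' hk
    exact ha m ▸ (hPA _).1⟩
  have hstepB : ∀ z ∈ B, ∀ k, dist (b k) z ^ 2 + dist (a k) (b k) ^ 2 ≤ dist (a k) z ^ 2 :=
    fun z hz k => hb k ▸ hBc.dist_sq_add_dist_sq_le_of_forall_dist_le (hPB _).1 hz (hPB _).2
  have hstepA : ∀ z ∈ A, ∀ k, dist (a (k + 1)) z ≤ dist (b k) z :=
    fun z hz k => ha k ▸ hAc.dist_le_of_forall_dist_le (hPA _).1 hz (hPA _).2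
  have hanti : ∀ z ∈ A ∩ B, Antitone fun k => dist (a k) z := fun z hz =>
    antitone_nat_of_succ_le fun k => (hstepA z hz.1 k).trans
      (hb k ▸ hBc.dist_le_of_forall_dist_le (hPB _).1 hz.2 (hPB _).2)
  obtain ⟨z₀, hz₀⟩ := hAB
  have hab : Tendsto (fun k => dist (a k) (b k)) atTop (𝓝 0) := by
    have hsq := tendsto_zero_of_nonneg_of_le_sub_succ (d := fun k => dist (a k) z₀ ^ 2)
      ⟨0, by rintro _ ⟨k, rfl⟩; positivity⟩ (fun k => sq_nonneg (dist (a k) (b k)))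
      fun k => by
        have := pow_le_pow_left₀ dist_nonneg (hstepA z₀ hz₀.1 k) 2
        linarith [hstepB z₀ hz₀.2 k]
    simpa [Real.sqrt_sq dist_nonneg] using hsq.sqrt
  obtain ⟨x, -, φ, hφ, hφa⟩ := tendsto_subseq_of_bounded Metric.isBounded_closedBall
    fun k => Metric.mem_closedBall.2 (hanti z₀ hz₀ k.zero_le)
  have hφb : Tendsto (b ∘ φ) atTop (𝓝 x) := hφa.congr_dist (hab.comp hφ.tendsto_atTop)
  have hx : x ∈ A ∩ B := ⟨hA.mem_of_tendsto hφa (hφ.tendsto_atTop.eventually haA),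
    hB.mem_of_tendsto hφb (Eventually.of_forall fun k => hbB (φ k))⟩
  have hax : Tendsto a atTop (𝓝 x) := tendsto_atTop_of_antitone_dist_of_mem_closure_range
    (hanti x hx) (mem_closure_of_tendsto hφa (Eventually.of_forall fun k => Set.mem_range_self _))
  exact ⟨x, hx, hax, hax.congr_dist hab⟩

theorem stmt_8 {n : ℕ} (A B : Set (EuclideanSpace ℝ (Fin n)))
    (hA : IsClosed A) (hB : IsClosed B) (hAc : Convex ℝ A) (hBc : Convex ℝ B)
    (hAne : A.Nonempty) (hBne : B.Nonempty) (hAB : (A ∩ B).Nonempty)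
    (PA PB : EuclideanSpace ℝ (Fin n) → EuclideanSpace ℝ (Fin n))
    (hPA : ∀ x, PA x ∈ A ∧ ∀ w ∈ A, dist x (PA x) ≤ dist x w)
    (hPB : ∀ x, PB x ∈ B ∧ ∀ w ∈ B, dist x (PB x) ≤ dist x w)
    (x₀ : EuclideanSpace ℝ (Fin n))
    (a b : ℕ → EuclideanSpace ℝ (Fin n))
    (ha0 : a 0 = PA x₀)
    (hb : ∀ k, b k = PB (a k))
    (ha : ∀ k, a (k + 1) = PA (b k)) :
    ∃ xstar ∈ A ∩ B, Tendsto a atTop (𝓝 xstar) ∧ Tendsto b atTop (𝓝 xstar) :=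
  stmt_8_general A B hA hB hAc hBc hAB PA PB hPA hPB a b hb ha
end

section
/- Let A, B ⊆ ℝⁿ be nonempty closed convex sets, with A compact and A ∩ B = ∅. Let (aₙ), (bₙ) be generated by alternating metric projections a₁ = P_A(x₀), bₙ = P_B(aₙ), aₙ₊₁ = P_A(bₙ). Then aₙ → a* ∈ A and bₙ → b* ∈ B with ‖a* - b*‖ = dist(A, B). -/
/-!
Metric projections onto closed convex sets are characterised by the variational inequality
`⟪x - P x, w - P x⟫ ≤ 0`, hence are nonexpansive. The gap `‖aₖ - P_B aₖ‖` is nonincreasing, so by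
compactness of `A` some subsequence of `(aₖ)` converges to a point `p` realising the limiting gap;
passing to the limit in one more half-step shows that `p` is nearest in `A` to `P_B p`, i.e. `p`
is a fixed point of the nonexpansive map `P_A ∘ P_B`. Then `‖aₖ - p‖` is nonincreasing and tends to
`0` along the subsequence, so along the whole sequence. Finally, the variational inequalities at
`p = P_A q` and `q = P_B p` place `A` and `B` on opposite sides of two hyperplanes orthogonal to
`p - q`, so `‖p - q‖` is the distance between the sets.
-/

open Filter Topology
open scoped RealInnerProductSpace

section Metric

variable {X : Type*} [PseudoMetricSpace X]

theorem tendsto_of_tendsto_subseq_of_nonexpansive {T : X → X}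
    (hT : ∀ x y, dist (T x) (T y) ≤ dist x y) {u : ℕ → X} (hu : ∀ k, u (k + 1) = T (u k))
    {p : X} (hp : T p = p) {φ : ℕ → ℕ} (hφ : StrictMono φ)
    (hlim : Tendsto (u ∘ φ) atTop (𝓝 p)) : Tendsto u atTop (𝓝 p) := by
  have hanti : Antitone fun k => dist (u k) p :=
    antitone_nat_of_succ_le fun k => by
      simpa only [hu, hp] using hT (u k) p
  rw [tendsto_iff_dist_tendsto_zero] at hlim ⊢
  exact (tendsto_iff_tendsto_subseq_of_antitone hanti hφ.tendsto_atTop).2 hlim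

def IsMetricProjection (K : Set X) (P : X → X) : Prop :=
  ∀ x, P x ∈ K ∧ ∀ w ∈ K, dist x (P x) ≤ dist x w

theorem antitone_dist_of_alternating {A B : Set X} {PA PB : X → X} {a : ℕ → X}
    (hPA : IsMetricProjection A PA) (hPB : IsMetricProjection B PB) (haA : ∀ k, a k ∈ A)
    (ha : ∀ k, a (k + 1) = PA (PB (a k))) :
    Antitone fun k => dist (a k) (PB (a k)) := by
  refine antitone_nat_of_succ_le fun k => ((hPB _).2 (PB (a k)) (hPB _).1).trans ?_
  rw [ha, dist_comm, dist_comm (a k)]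
  exact (hPA _).2 _ (haA k)

end Metric

variable {E : Type*} [NormedAddCommGroup E] [InnerProductSpace ℝ E]

theorem norm_le_norm_of_sq_le_inner {v w : E} (h : ‖v‖ ^ 2 ≤ ⟪w, v⟫) : ‖v‖ ≤ ‖w‖ := by
  nlinarith [real_inner_le_norm w v, norm_nonneg v, norm_nonneg w]

theorem dist_le_dist_of_inner_le_zero {p q x y : E} (hx : ⟪q - p, x - p⟫ ≤ 0)
    (hy : ⟪p - q, y - q⟫ ≤ 0) : dist p q ≤ dist x y := by
  have hsplit : x - y = (x - p) + (p - q) + (q - y) := by abel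
  have hx' : ⟪q - p, x - p⟫ = -⟪x - p, p - q⟫ := by
    rw [← neg_sub p q, inner_neg_left, real_inner_comm]
  have hy' : ⟪p - q, y - q⟫ = -⟪q - y, p - q⟫ := by
    rw [← neg_sub q y, inner_neg_right, real_inner_comm]
  rw [dist_eq_norm, dist_eq_norm]
  refine norm_le_norm_of_sq_le_inner ?_
  rw [hsplit, inner_add_left, inner_add_left, real_inner_self_eq_norm_sq]
  linarith

namespace IsMetricProjection

variable {K : Set E} {P : E → E}

theorem inner_sub_le_zero (hP : IsMetricProjection K P) (hK : Convex ℝ K) (x : E) {w : E}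
    (hw : w ∈ K) : ⟪x - P x, w - P x⟫ ≤ 0 := by
  refine (norm_eq_iInf_iff_real_inner_le_zero hK (hP x).1).1 ?_ w hw
  have : Nonempty K := ⟨⟨w, hw⟩⟩
  refine le_antisymm (le_ciInf fun v => ?_)
    (ciInf_le ⟨0, fun _ ⟨_, h⟩ => h ▸ norm_nonneg _⟩ (⟨P x, (hP x).1⟩ : K))
  simpa only [dist_eq_norm] using (hP x).2 v v.2

theorem dist_sq_add_dist_sq_le (hP : IsMetricProjection K P) (hK : Convex ℝ K) (x : E)
    {w : E} (hw : w ∈ K) : dist x (P x) ^ 2 + dist (P x) w ^ 2 ≤ dist x w ^ 2 := by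
  have hsplit : x - w = (x - P x) - (w - P x) := by abel
  rw [dist_eq_norm, dist_eq_norm, dist_eq_norm, hsplit, norm_sub_sq_real (x - P x),
    norm_sub_rev (P x) w]
  linarith [hP.inner_sub_le_zero hK x hw]

theorem eq_of_dist_le (hP : IsMetricProjection K P) (hK : Convex ℝ K) {x w : E} (hw : w ∈ K)
    (h : dist x w ≤ dist x (P x)) : w = P x := by
  have hpyth := hP.dist_sq_add_dist_sq_le hK x hw
  have hsq : dist (P x) w ^ 2 = 0 := by
    nlinarith [dist_nonneg (x := x) (y := w), sq_nonneg (dist (P x) w)]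
  exact (dist_eq_zero.1 ((pow_eq_zero_iff two_ne_zero).1 hsq)).symm

theorem dist_le (hP : IsMetricProjection K P) (hK : Convex ℝ K) (x y : E) :
    dist (P x) (P y) ≤ dist x y := by
  have hx := hP.inner_sub_le_zero hK x (hP y).1
  have hy := hP.inner_sub_le_zero hK y (hP x).1
  rw [← neg_sub (P x) (P y), inner_neg_right] at hx
  have hfirm : ⟪x - y, P x - P y⟫ =
      ⟪x - P x, P x - P y⟫ - ⟪y - P y, P x - P y⟫ + ‖P x - P y‖ ^ 2 := by
    rw [← real_inner_self_eq_norm_sq, ← inner_sub_left, ← inner_add_left]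
    congr 1
    abel
  rw [dist_eq_norm, dist_eq_norm]
  refine norm_le_norm_of_sq_le_inner ?_
  rw [hfirm]
  linarith

theorem continuous (hP : IsMetricProjection K P) (hK : Convex ℝ K) : Continuous P :=
  (LipschitzWith.of_dist_le_mul (K := 1) fun x y => by simpa using hP.dist_le hK x y).continuous

end IsMetricProjection

section AlternatingProjections

variable {A B : Set E} {PA PB : E → E}

theorem isLeast_dist_of_isMetricProjection (hPA : IsMetricProjection A PA)
    (hPB : IsMetricProjection B PB) (hAc : Convex ℝ A) (hBc : Convex ℝ B) {p : E}
    (hp : PA (PB p) = p) :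
    IsLeast {d : ℝ | ∃ x ∈ A, ∃ y ∈ B, d = dist x y} (dist p (PB p)) := by
  refine ⟨⟨p, hp ▸ (hPA _).1, PB p, (hPB p).1, rfl⟩, ?_⟩
  rintro _ ⟨x, hx, y, hy, rfl⟩
  refine dist_le_dist_of_inner_le_zero ?_ (hPB.inner_sub_le_zero hBc p hy)
  simpa only [hp] using hPA.inner_sub_le_zero hAc (PB p) hx

theorem fixed_of_tendsto_subseq_of_alternating (hPA : IsMetricProjection A PA)
    (hPB : IsMetricProjection B PB) (hAc : Convex ℝ A) (hBc : Convex ℝ B) {a : ℕ → E}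
    (haA : ∀ k, a k ∈ A) (ha : ∀ k, a (k + 1) = PA (PB (a k))) {p : E} (hpA : p ∈ A)
    {φ : ℕ → ℕ} (hφ : StrictMono φ)
    (hlim : Tendsto (a ∘ φ) atTop (𝓝 p)) : PA (PB p) = p := by
  have hbdd : BddBelow (Set.range fun k => dist (a k) (PB (a k))) :=
    ⟨0, fun _ ⟨_, hk⟩ => hk ▸ dist_nonneg⟩
  set d := ⨅ k, dist (a k) (PB (a k))
  have hgap : Tendsto (fun k => dist (a k) (PB (a k))) atTop (𝓝 d) :=
    tendsto_atTop_ciInf (antitone_dist_of_alternating hPA hPB haA ha) hbdd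
  have hlimB : Tendsto (fun j => PB (a (φ j))) atTop (𝓝 (PB p)) :=
    ((hPB.continuous hBc).tendsto p).comp hlim
  have hpd : dist p (PB p) = d :=
    tendsto_nhds_unique (hlim.dist hlimB) (hgap.comp hφ.tendsto_atTop)
  have hnext : Tendsto (fun j => a (φ j + 1)) atTop (𝓝 (PA (PB p))) := by
    simp only [ha]
    exact ((hPA.continuous hAc).tendsto _).comp hlimB
  -- one more half-step cannot push the gap below its limit `d`
  have hd_le : d ≤ dist (PA (PB p)) (PB p) :=
    ge_of_tendsto (hnext.dist hlimB) (Eventually.of_forall fun j =>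
      (ciInf_le hbdd (φ j + 1)).trans ((hPB _).2 _ (hPB _).1))
  refine (hPA.eq_of_dist_le hAc hpA ?_).symm
  rw [dist_comm, hpd, dist_comm]
  exact hd_le

end AlternatingProjections

theorem stmt_9_general {n : ℕ} (A B : Set (EuclideanSpace ℝ (Fin n)))
    (hAc : Convex ℝ A) (hBc : Convex ℝ B)
    (hAcomp : IsCompact A)
    (PA PB : EuclideanSpace ℝ (Fin n) → EuclideanSpace ℝ (Fin n))
    (hPA : ∀ x, PA x ∈ A ∧ ∀ w ∈ A, dist x (PA x) ≤ dist x w)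
    (hPB : ∀ x, PB x ∈ B ∧ ∀ w ∈ B, dist x (PB x) ≤ dist x w)
    (x₀ : EuclideanSpace ℝ (Fin n))
    (a b : ℕ → EuclideanSpace ℝ (Fin n))
    (ha0 : a 0 = PA x₀)
    (hb : ∀ k, b k = PB (a k))
    (ha : ∀ k, a (k + 1) = PA (b k)) :
    ∃ astar ∈ A, ∃ bstar ∈ B,
      Tendsto a atTop (𝓝 astar) ∧ Tendsto b atTop (𝓝 bstar) ∧
      ‖astar - bstar‖ = sInf {d : ℝ | ∃ x ∈ A, ∃ y ∈ B, d = dist x y} := by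
  have hPA : IsMetricProjection A PA := hPA
  have hPB : IsMetricProjection B PB := hPB
  have ha' : ∀ k, a (k + 1) = PA (PB (a k)) := fun k => (ha k).trans (congrArg PA (hb k))
  have haA : ∀ k, a k ∈ A := by
    rintro (_ | k)
    · exact ha0 ▸ (hPA x₀).1
    · exact (ha k) ▸ (hPA _).1
  obtain ⟨p, hpA, φ, hφ, hlim⟩ := hAcomp.tendsto_subseq haA
  have hfix := fixed_of_tendsto_subseq_of_alternating hPA hPB hAc hBc haA ha' hpA hφ hlim
  have hconv : Tendsto a atTop (𝓝 p) :=
    tendsto_of_tendsto_subseq_of_nonexpansive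
      (fun x y => (hPA.dist_le hAc _ _).trans (hPB.dist_le hBc x y)) ha' hfix hφ hlim
  refine ⟨p, hpA, PB p, (hPB p).1, hconv, ?_, ?_⟩
  · rw [show b = fun k => PB (a k) from funext hb]
    exact ((hPB.continuous hBc).tendsto p).comp hconv
  · rw [← dist_eq_norm]
    exact (isLeast_dist_of_isMetricProjection hPA hPB hAc hBc hfix).csInf_eq.symm

theorem stmt_9 {n : ℕ} (A B : Set (EuclideanSpace ℝ (Fin n)))
    (hA : IsClosed A) (hB : IsClosed B) (hAc : Convex ℝ A) (hBc : Convex ℝ B)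
    (hAne : A.Nonempty) (hBne : B.Nonempty) (hAcomp : IsCompact A)
    (hAB : A ∩ B = ∅)
    (PA PB : EuclideanSpace ℝ (Fin n) → EuclideanSpace ℝ (Fin n))
    (hPA : ∀ x, PA x ∈ A ∧ ∀ w ∈ A, dist x (PA x) ≤ dist x w)
    (hPB : ∀ x, PB x ∈ B ∧ ∀ w ∈ B, dist x (PB x) ≤ dist x w)
    (x₀ : EuclideanSpace ℝ (Fin n))
    (a b : ℕ → EuclideanSpace ℝ (Fin n))
    (ha0 : a 0 = PA x₀)
    (hb : ∀ k, b k = PB (a k))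
    (ha : ∀ k, a (k + 1) = PA (b k)) :
    ∃ astar ∈ A, ∃ bstar ∈ B,
      Tendsto a atTop (𝓝 astar) ∧ Tendsto b atTop (𝓝 bstar) ∧
      ‖astar - bstar‖ = sInf {d : ℝ | ∃ x ∈ A, ∃ y ∈ B, d = dist x y} :=
  stmt_9_general A B hAc hBc hAcomp PA PB hPA hPB x₀ a b ha0 hb ha
end

section
/- Let C₁, …, C_r ⊆ ℝⁿ be closed convex sets with nonempty intersection. Dykstra's algorithm, defined by xₙⁱ = P_{Cᵢ}(xₙ^{i-1} - I_{n-1}ⁱ), Iₙⁱ = xₙⁱ - (xₙ^{i-1} - I_{n-1}ⁱ), xₙ⁰ = x_{n-1}^r, with x₁⁰ = x and I₀ⁱ = 0, produces iterates converging to P_{⋂ᵢ Cᵢ}(x), the metric projection of x onto the intersection. -/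
/-!
Boyle–Dykstra argument. For every point `y` of the intersection, the energy
`‖xₘ - y‖² + 2 ∑ᵢ ⟪Iₘⁱ, y - xₘⁱ⟫` (with `xₘ` the end of the `m`-th cycle) decreases along the
iteration by a nonnegative amount that dominates the squared step lengths of the cycle. Hence the
row lengths `cₘ` are square summable, which forces `sₘ cₘ → 0` along a subsequence, `sₘ` being the
total path length up to cycle `m` (it bounds the correction terms). Along that subsequence the
iterates converge to a point `q` of the intersection satisfying the variational inequality
`⟪x - q, w - q⟫ ≤ 0` of the nearest point; and since the energy at `y = q` is antitone and tends
to `0` along the subsequence, the whole sequence converges to `q`.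
-/

open Filter Topology Finset
open scoped RealInnerProductSpace

theorem tendsto_zero_of_sq_tendsto_zero {α : Type*} {l : Filter α} {u : α → ℝ}
    (hu : ∀ a, 0 ≤ u a) (h : Tendsto (fun a => u a ^ 2) l (𝓝 0)) : Tendsto u l (𝓝 0) := by
  simpa [Real.sqrt_sq (hu _)] using h.sqrt

/-- Otherwise Cauchy–Schwarz would give `dₗ² ≳ 1 / (l + 1)`, contradicting the divergence of the
harmonic series. -/
theorem frequently_sum_range_mul_lt {d : ℕ → ℝ} {A : ℝ} (hA : ∀ M, ∑ k ∈ range M, d k ^ 2 ≤ A)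
    {ε : ℝ} (hε : 0 < ε) :
    ∃ᶠ l in atTop, (∑ k ∈ range (l + 1), d k) * d l < ε := by
  intro hlarge
  have harmonic_le : ∀ᶠ l : ℕ in atTop, ‖1 / ((l : ℝ) + 1)‖ ≤ A / ε ^ 2 * d l ^ 2 := by
    filter_upwards [hlarge] with l hl
    replace hl := not_lt.1 hl
    have hcs : (∑ k ∈ range (l + 1), d k) ^ 2 ≤ ((l : ℝ) + 1) * A := by
      calc (∑ k ∈ range (l + 1), d k) ^ 2 ≤ ((l : ℝ) + 1) * ∑ k ∈ range (l + 1), d k ^ 2 := by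
            simpa using sq_sum_le_card_mul_sum_sq (s := range (l + 1)) (f := d)
        _ ≤ ((l : ℝ) + 1) * A := by gcongr; exact hA _
    have hε_le : ε ^ 2 ≤ ((l : ℝ) + 1) * A * d l ^ 2 := by
      calc ε ^ 2 ≤ ((∑ k ∈ range (l + 1), d k) * d l) ^ 2 := pow_le_pow_left₀ hε.le hl 2
        _ = (∑ k ∈ range (l + 1), d k) ^ 2 * d l ^ 2 := mul_pow _ _ _
        _ ≤ ((l : ℝ) + 1) * A * d l ^ 2 := by gcongr
    rw [Real.norm_of_nonneg (by positivity), div_le_iff₀ (by positivity),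
      show A / ε ^ 2 * d l ^ 2 * ((l : ℝ) + 1) = ((l : ℝ) + 1) * A * d l ^ 2 / ε ^ 2 by ring,
      le_div_iff₀ (by positivity), one_mul]
    exact hε_le
  have hsq : Summable fun k => d k ^ 2 := summable_of_sum_range_le (fun k => sq_nonneg _) hA
  have hharmonic := (hsq.mul_left (A / ε ^ 2)).of_norm_bounded_eventually_nat harmonic_le
  refine Real.not_summable_one_div_natCast ((summable_nat_add_iff 1).1 ?_)
  simpa using hharmonic

theorem mem_biInter_Icc_one_iff {α : Type*} {C : ℕ → Set α} {r : ℕ} {y : α} :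
    y ∈ ⋂ i ∈ Set.Icc 1 r, C i ↔ ∀ j < r, y ∈ C (j + 1) := by
  simp only [Set.mem_iInter₂, Set.mem_Icc]
  refine ⟨fun hy j hj => hy (j + 1) ⟨by omega, by omega⟩, fun hy i hi => ?_⟩
  obtain ⟨j, rfl⟩ := Nat.exists_eq_add_of_le' hi.1
  exact hy j (by omega)

variable {E : Type*} [NormedAddCommGroup E]

namespace Dykstra

variable {r : ℕ}

def rowLength (r : ℕ) (x : ℕ → ℕ → E) (m : ℕ) : ℝ :=
  ∑ j ∈ range r, ‖x m (j + 1) - x m j‖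

def pathLength (r : ℕ) (x : ℕ → ℕ → E) (m : ℕ) : ℝ :=
  ∑ k ∈ range m, rowLength r x (k + 1)

theorem rowLength_nonneg (x : ℕ → ℕ → E) (m : ℕ) : 0 ≤ rowLength r x m :=
  sum_nonneg fun _ _ => norm_nonneg _

theorem pathLength_nonneg (x : ℕ → ℕ → E) (m : ℕ) : 0 ≤ pathLength r x m :=
  sum_nonneg fun _ _ => rowLength_nonneg x _

theorem rowLength_le_pathLength (x : ℕ → ℕ → E) {m : ℕ} (hm : 1 ≤ m) :
    rowLength r x m ≤ pathLength r x m := by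
  obtain ⟨k, rfl⟩ := Nat.exists_eq_add_of_le' hm
  exact single_le_sum (f := fun k => rowLength r x (k + 1)) (fun _ _ => rowLength_nonneg x _)
    (self_mem_range_succ k)

theorem norm_sub_le_rowLength (x : ℕ → ℕ → E) (m : ℕ) {j : ℕ} (hj : j < r) :
    ‖x m r - x m (j + 1)‖ ≤ rowLength r x m := by
  rw [← dist_eq_norm, dist_comm]
  refine (dist_le_Ico_sum_dist (x m) hj).trans ?_
  simp only [dist_eq_norm']
  exact sum_le_sum_of_subset_of_nonneg (fun i hi => mem_range.2 (mem_Ico.1 hi).2)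
    fun _ _ _ => norm_nonneg _

theorem tendsto_rowLength_of_tendsto_pathLength_mul (x : ℕ → ℕ → E) {μ : ℕ → ℕ}
    (hμ1 : ∀ i, 1 ≤ μ i)
    (hsc : Tendsto (fun i => pathLength r x (μ i) * rowLength r x (μ i)) atTop (𝓝 0)) :
    Tendsto (fun i => rowLength r x (μ i)) atTop (𝓝 0) := by
  refine tendsto_zero_of_sq_tendsto_zero (fun i => rowLength_nonneg x _) ?_
  refine squeeze_zero (fun i => sq_nonneg _) (fun i => ?_) hsc
  rw [sq]
  exact mul_le_mul_of_nonneg_right (rowLength_le_pathLength x (hμ1 i)) (rowLength_nonneg x _)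

end Dykstra

variable [InnerProductSpace ℝ E]

theorem inner_sub_nonpos_of_forall_dist_le {K : Set E} (hK : Convex ℝ K) {z v : E} (hv : v ∈ K)
    (hmin : ∀ w ∈ K, dist z v ≤ dist z w) : ∀ w ∈ K, ⟪z - v, w - v⟫ ≤ 0 := by
  rw [← norm_eq_iInf_iff_real_inner_le_zero hK hv]
  have : Nonempty K := ⟨⟨v, hv⟩⟩
  refine le_antisymm (le_ciInf fun w => by simpa [dist_eq_norm] using hmin w w.2) ?_
  exact ciInf_le ⟨0, by rintro _ ⟨w, rfl⟩; exact norm_nonneg _⟩ (⟨v, hv⟩ : K)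

theorem dist_le_of_inner_sub_nonpos {z q w : E} (h : ⟪z - q, w - q⟫ ≤ 0) :
    dist z q ≤ dist z w := by
  rw [dist_eq_norm, dist_eq_norm, ← sq_le_sq₀ (norm_nonneg _) (norm_nonneg _),
    ← sub_sub_sub_cancel_right z w q, norm_sub_sq_real (z - q)]
  nlinarith [sq_nonneg ‖w - q‖]

/-- One projection step `b ↦ a` of the energy identity: `p`, `q` are the old and new corrections
and `c` is the iterate of the previous cycle. -/
theorem norm_sub_sq_sub_norm_sub_sq_of_sub_eq {a b p q c y : E} (hs : b - a = p - q) :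
    ‖b - y‖ ^ 2 - ‖a - y‖ ^ 2
      = ‖a - b‖ ^ 2 + 2 * ⟪p, a - c⟫ + 2 * ⟪q, y - a⟫ - 2 * ⟪p, y - c⟫ := by
  rw [show b - y = (p - q) + (a - y) by rw [← hs]; abel, show a - b = -(p - q) by rw [← hs]; abel,
    norm_add_sq_real, norm_neg]
  simp only [inner_sub_left, inner_sub_right, real_inner_comm]
  ring

/-- Dykstra's iteration, through the properties of the recursion that the convergence proof uses.
`x m i` is the `i`-th iterate of cycle `m ≥ 1` and `I m i` the correction for `C i` after `m`
cycles; `inner_correction_nonneg` is the variational inequality of the projection producing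
`x m i`, whose displacement is `I m i`. -/
structure IsDykstraSeq (r : ℕ) (C : ℕ → Set E) (x₀ : E) (x I : ℕ → ℕ → E) : Prop where
  start : x 1 0 = x₀
  correction_zero : ∀ i, I 0 i = 0
  row_succ : ∀ m, 1 ≤ m → x (m + 1) 0 = x m r
  mem : ∀ m, 1 ≤ m → ∀ j < r, x m (j + 1) ∈ C (j + 1)
  inner_correction_nonneg : ∀ m, ∀ j < r, ∀ w ∈ C (j + 1), 0 ≤ ⟪I m (j + 1), w - x m (j + 1)⟫
  sub_eq_correction_sub :
    ∀ m, ∀ j < r, x (m + 1) j - x (m + 1) (j + 1) = I m (j + 1) - I (m + 1) (j + 1)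

theorem IsDykstraSeq.of_nearest {r : ℕ} {C : ℕ → Set E} {P : ℕ → E → E} {x₀ : E}
    {x I : ℕ → ℕ → E} (hCcv : ∀ i, 1 ≤ i → i ≤ r → Convex ℝ (C i))
    (hP : ∀ i, 1 ≤ i → i ≤ r → ∀ z, P i z ∈ C i ∧ ∀ w ∈ C i, dist z (P i z) ≤ dist z w)
    (hstart : x 1 0 = x₀) (hI0 : ∀ i, I 0 i = 0)
    (hx : ∀ m, 1 ≤ m → ∀ i, 1 ≤ i → i ≤ r → x m i = P i (x m (i - 1) - I (m - 1) i))
    (hI : ∀ m, 1 ≤ m → ∀ i, 1 ≤ i → i ≤ r → I m i = x m i - (x m (i - 1) - I (m - 1) i))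
    (hrow : ∀ m, 1 ≤ m → x (m + 1) 0 = x m r) : IsDykstraSeq r C x₀ x I where
  start := hstart
  correction_zero := hI0
  row_succ := hrow
  mem m hm j hj := by
    rw [hx m hm (j + 1) (by omega) (by omega)]
    exact (hP (j + 1) (by omega) (by omega) _).1
  inner_correction_nonneg m j hj w hw := by
    rcases m with _ | m
    · simp [hI0]
    have hxm := hx (m + 1) (by omega) (j + 1) (by omega) (by omega)
    have hIm := hI (m + 1) (by omega) (j + 1) (by omega) (by omega)
    simp only [Nat.add_sub_cancel] at hxm hIm
    obtain ⟨hPmem, hPmin⟩ := hP (j + 1) (by omega) (by omega) (x (m + 1) j - I m (j + 1))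
    rw [← hxm] at hPmem hPmin
    have hvi := inner_sub_nonpos_of_forall_dist_le (hCcv (j + 1) (by omega) (by omega))
      hPmem hPmin w hw
    rw [hIm, ← neg_sub, inner_neg_left]
    linarith
  sub_eq_correction_sub m j hj := by
    rw [hI (m + 1) (by omega) (j + 1) (by omega) (by omega), Nat.add_sub_cancel, Nat.add_sub_cancel]
    abel

namespace Dykstra

def dissipation (r : ℕ) (x I : ℕ → ℕ → E) (k : ℕ) : ℝ :=
  ∑ j ∈ range r, (‖x (k + 1) (j + 1) - x (k + 1) j‖ ^ 2
    + 2 * ⟪I k (j + 1), x (k + 1) (j + 1) - x k (j + 1)⟫)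

def pairing (r : ℕ) (x I : ℕ → ℕ → E) (y : E) (m : ℕ) : ℝ :=
  ∑ j ∈ range r, ⟪I m (j + 1), y - x m (j + 1)⟫

end Dykstra

namespace IsDykstraSeq

open Dykstra

variable {r : ℕ} {C : ℕ → Set E} {x₀ : E} {x I : ℕ → ℕ → E}

theorem correction_succ (h : IsDykstraSeq r C x₀ x I) (m : ℕ) {j : ℕ} (hj : j < r) :
    I (m + 1) (j + 1) = I m (j + 1) + (x (m + 1) (j + 1) - x (m + 1) j) := by
  rw [← neg_sub (x (m + 1) j), h.sub_eq_correction_sub m j hj]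
  abel

theorem correction_eq_sum (h : IsDykstraSeq r C x₀ x I) (m : ℕ) {j : ℕ} (hj : j < r) :
    I m (j + 1) = ∑ k ∈ range m, (x (k + 1) (j + 1) - x (k + 1) j) := by
  induction m with
  | zero => simp [h.correction_zero]
  | succ m ih => rw [h.correction_succ m hj, ih, sum_range_succ]

theorem norm_correction_le (h : IsDykstraSeq r C x₀ x I) (m : ℕ) {j : ℕ} (hj : j < r) :
    ‖I m (j + 1)‖ ≤ pathLength r x m := by
  rw [h.correction_eq_sum m hj]
  refine (norm_sum_le _ _).trans (sum_le_sum fun k _ => ?_)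
  exact single_le_sum (f := fun j => ‖x (k + 1) (j + 1) - x (k + 1) j‖)
    (fun _ _ => norm_nonneg _) (mem_range.2 hj)

theorem row_start_eq (h : IsDykstraSeq r C x₀ x I) (m : ℕ) :
    x (m + 1) 0 = x₀ + ∑ j ∈ range r, I m (j + 1) := by
  induction m with
  | zero => simp [h.start, h.correction_zero]
  | succ m ih =>
    rw [h.row_succ (m + 1) (by omega),
      sum_congr rfl fun j hj => h.correction_succ m (mem_range.1 hj), sum_add_distrib,
      sum_range_sub (fun j => x (m + 1) j), ← add_assoc, ← ih]
    abel

theorem inner_correction_step_nonneg (h : IsDykstraSeq r C x₀ x I) (k : ℕ) {j : ℕ} (hj : j < r) :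
    0 ≤ ⟪I k (j + 1), x (k + 1) (j + 1) - x k (j + 1)⟫ :=
  h.inner_correction_nonneg k j hj _ (h.mem (k + 1) (by omega) j hj)

theorem sum_sq_le_dissipation (h : IsDykstraSeq r C x₀ x I) (k : ℕ) :
    ∑ j ∈ range r, ‖x (k + 1) (j + 1) - x (k + 1) j‖ ^ 2 ≤ dissipation r x I k :=
  sum_le_sum fun _ hj => le_add_of_nonneg_right
    (mul_nonneg zero_le_two (h.inner_correction_step_nonneg k (mem_range.1 hj)))

theorem dissipation_nonneg (h : IsDykstraSeq r C x₀ x I) (k : ℕ) : 0 ≤ dissipation r x I k :=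
  (sum_nonneg fun _ _ => sq_nonneg _).trans (h.sum_sq_le_dissipation k)

theorem rowLength_sq_le (h : IsDykstraSeq r C x₀ x I) (k : ℕ) :
    rowLength r x (k + 1) ^ 2 ≤ r * dissipation r x I k := by
  calc rowLength r x (k + 1) ^ 2
      ≤ r * ∑ j ∈ range r, ‖x (k + 1) (j + 1) - x (k + 1) j‖ ^ 2 := by
        simpa [rowLength] using sq_sum_le_card_mul_sum_sq (s := range r)
          (f := fun j => ‖x (k + 1) (j + 1) - x (k + 1) j‖)
    _ ≤ r * dissipation r x I k := by gcongr; exact h.sum_sq_le_dissipation k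

theorem energy_step (h : IsDykstraSeq r C x₀ x I) (y : E) (m : ℕ) :
    ‖x (m + 1) 0 - y‖ ^ 2 + 2 * pairing r x I y m
      = ‖x (m + 2) 0 - y‖ ^ 2 + 2 * pairing r x I y (m + 1) + dissipation r x I m := by
  have htele := sum_congr rfl fun j hj =>
    norm_sub_sq_sub_norm_sub_sq_of_sub_eq (c := x m (j + 1)) (y := y)
      (h.sub_eq_correction_sub m j (mem_range.1 hj))
  rw [sum_range_sub' (fun j => ‖x (m + 1) j - y‖ ^ 2), ← h.row_succ (m + 1) (by omega)] at htele
  simp only [dissipation, pairing, sum_add_distrib, sum_sub_distrib, ← mul_sum] at htele ⊢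
  linarith

theorem energy_eq (h : IsDykstraSeq r C x₀ x I) (y : E) (m : ℕ) :
    ‖x (m + 1) 0 - y‖ ^ 2 + 2 * pairing r x I y m
      = ‖x₀ - y‖ ^ 2 - ∑ k ∈ range m, dissipation r x I k := by
  induction m with
  | zero => simp [pairing, h.correction_zero, h.start]
  | succ m ih => rw [sum_range_succ]; linarith [h.energy_step y m]

variable {y : E}

theorem pairing_nonneg (h : IsDykstraSeq r C x₀ x I) (hy : ∀ j < r, y ∈ C (j + 1)) (m : ℕ) :
    0 ≤ pairing r x I y m :=
  sum_nonneg fun j hj => h.inner_correction_nonneg m j (mem_range.1 hj) y (hy j (mem_range.1 hj))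

theorem sum_dissipation_le (h : IsDykstraSeq r C x₀ x I) (hy : ∀ j < r, y ∈ C (j + 1)) (m : ℕ) :
    ∑ k ∈ range m, dissipation r x I k ≤ ‖x₀ - y‖ ^ 2 := by
  linarith [h.energy_eq y m, h.pairing_nonneg hy m, sq_nonneg ‖x (m + 1) 0 - y‖]

theorem norm_row_start_sub_le (h : IsDykstraSeq r C x₀ x I) (hy : ∀ j < r, y ∈ C (j + 1))
    (m : ℕ) : ‖x (m + 1) 0 - y‖ ≤ ‖x₀ - y‖ := by
  refine (sq_le_sq₀ (norm_nonneg _) (norm_nonneg _)).1 ?_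
  linarith [h.energy_eq y m, h.pairing_nonneg hy m,
    sum_nonneg fun k (_ : k ∈ range m) => h.dissipation_nonneg k]

theorem sum_sq_rowLength_le (h : IsDykstraSeq r C x₀ x I) (hy : ∀ j < r, y ∈ C (j + 1))
    (M : ℕ) : ∑ k ∈ range M, rowLength r x (k + 1) ^ 2 ≤ r * ‖x₀ - y‖ ^ 2 := by
  calc ∑ k ∈ range M, rowLength r x (k + 1) ^ 2
      ≤ ∑ k ∈ range M, r * dissipation r x I k := sum_le_sum fun k _ => h.rowLength_sq_le k
    _ ≤ r * ‖x₀ - y‖ ^ 2 := by rw [← mul_sum]; gcongr; exact h.sum_dissipation_le hy M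

theorem frequently_pathLength_mul_rowLength_lt (h : IsDykstraSeq r C x₀ x I)
    (hy : ∀ j < r, y ∈ C (j + 1)) {ε : ℝ} (hε : 0 < ε) :
    ∃ᶠ m in atTop, 1 ≤ m ∧ pathLength r x m * rowLength r x m < ε := by
  have hsmall := frequently_sum_range_mul_lt (h.sum_sq_rowLength_le hy) hε
  exact (tendsto_add_atTop_nat 1).frequently (hsmall.mono fun l hl => ⟨by omega, hl⟩)

theorem abs_pairing_sub_inner_le (h : IsDykstraSeq r C x₀ x I) {m : ℕ} (hm : 1 ≤ m) (y : E) :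
    |pairing r x I y m - ⟪x m r - x₀, y - x m r⟫|
      ≤ r * (pathLength r x m * rowLength r x m) := by
  have hsum : x m r - x₀ = ∑ j ∈ range r, I m (j + 1) := by
    rw [← h.row_succ m hm, h.row_start_eq m]
    abel
  have hdiff : pairing r x I y m - ⟪x m r - x₀, y - x m r⟫
      = ∑ j ∈ range r, ⟪I m (j + 1), x m r - x m (j + 1)⟫ := by
    rw [hsum, sum_inner, pairing, ← sum_sub_distrib]
    refine sum_congr rfl fun j _ => ?_
    rw [← inner_sub_right, sub_sub_sub_cancel_left]
  rw [hdiff]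
  calc |∑ j ∈ range r, ⟪I m (j + 1), x m r - x m (j + 1)⟫|
      ≤ ∑ j ∈ range r, |⟪I m (j + 1), x m r - x m (j + 1)⟫| := abs_sum_le_sum_abs _ _
    _ ≤ ∑ j ∈ range r, pathLength r x m * rowLength r x m := sum_le_sum fun j hj =>
        (abs_real_inner_le_norm _ _).trans (mul_le_mul (h.norm_correction_le m (mem_range.1 hj))
          (norm_sub_le_rowLength x m (mem_range.1 hj)) (norm_nonneg _) (pathLength_nonneg x m))
    _ = r * (pathLength r x m * rowLength r x m) := by rw [sum_const, card_range, nsmul_eq_mul]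

theorem exists_subseq_tendsto [ProperSpace E] (h : IsDykstraSeq r C x₀ x I)
    (hy : ∀ j < r, y ∈ C (j + 1)) :
    ∃ q : E, ∃ μ : ℕ → ℕ, StrictMono μ ∧ (∀ i, 1 ≤ μ i) ∧
      Tendsto (fun i => x (μ i) r) atTop (𝓝 q) ∧
      Tendsto (fun i => pathLength r x (μ i) * rowLength r x (μ i)) atTop (𝓝 0) := by
  obtain ⟨φ, hφ, hφP⟩ := extraction_forall_of_frequently fun n : ℕ =>
    h.frequently_pathLength_mul_rowLength_lt hy (Nat.one_div_pos_of_nat (n := n))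
  have hbdd : ∀ n, x (φ n) r ∈ Metric.closedBall y ‖x₀ - y‖ := fun n => by
    rw [Metric.mem_closedBall, dist_eq_norm, ← h.row_succ _ (hφP n).1]
    exact h.norm_row_start_sub_le hy _
  obtain ⟨q, -, ψ, hψ, hq⟩ := tendsto_subseq_of_bounded Metric.isBounded_closedBall hbdd
  refine ⟨q, φ ∘ ψ, hφ.comp hψ, fun i => (hφP _).1, hq, ?_⟩
  exact squeeze_zero (fun i => mul_nonneg (pathLength_nonneg x _) (rowLength_nonneg x _))
    (fun i => (hφP (ψ i)).2.le) (tendsto_one_div_add_atTop_nhds_zero_nat.comp hψ.tendsto_atTop)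

variable {q : E} {μ : ℕ → ℕ}

theorem mem_of_subseq (h : IsDykstraSeq r C x₀ x I) (hC : ∀ j < r, IsClosed (C (j + 1)))
    (hμ1 : ∀ i, 1 ≤ μ i) (hq : Tendsto (fun i => x (μ i) r) atTop (𝓝 q))
    (hc : Tendsto (fun i => rowLength r x (μ i)) atTop (𝓝 0)) : ∀ j < r, q ∈ C (j + 1) := by
  intro j hj
  have hconv : Tendsto (fun i => x (μ i) (j + 1)) atTop (𝓝 q) := by
    refine tendsto_iff_norm_sub_tendsto_zero.2 (squeeze_zero (fun _ => norm_nonneg _) (fun i => ?_)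
      (by simpa using hc.add (tendsto_iff_norm_sub_tendsto_zero.1 hq)))
    calc ‖x (μ i) (j + 1) - q‖ ≤ ‖x (μ i) (j + 1) - x (μ i) r‖ + ‖x (μ i) r - q‖ :=
          norm_sub_le_norm_sub_add_norm_sub _ _ _
      _ ≤ rowLength r x (μ i) + ‖x (μ i) r - q‖ := by
          rw [norm_sub_rev]; gcongr; exact norm_sub_le_rowLength x _ hj
  exact (hC j hj).mem_of_tendsto hconv (Eventually.of_forall fun i => h.mem _ (hμ1 i) j hj)

theorem inner_sub_nonpos_of_subseq (h : IsDykstraSeq r C x₀ x I) (hμ1 : ∀ i, 1 ≤ μ i)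
    (hq : Tendsto (fun i => x (μ i) r) atTop (𝓝 q))
    (hsc : Tendsto (fun i => pathLength r x (μ i) * rowLength r x (μ i)) atTop (𝓝 0))
    {w : E} (hw : ∀ j < r, w ∈ C (j + 1)) : ⟪x₀ - q, w - q⟫ ≤ 0 := by
  have hlim : Tendsto (fun i => ⟪x₀ - x (μ i) r, w - x (μ i) r⟫) atTop (𝓝 ⟪x₀ - q, w - q⟫) :=
    (tendsto_const_nhds.sub hq).inner (tendsto_const_nhds.sub hq)
  refine le_of_tendsto_of_tendsto' hlim (by simpa using hsc.const_mul (r : ℝ)) fun i => ?_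
  have hbound := (abs_le.1 (h.abs_pairing_sub_inner_le (hμ1 i) w)).2
  rw [← neg_sub (x (μ i) r), inner_neg_left]
  linarith [h.pairing_nonneg hw (μ i)]

theorem tendsto_pairing_subseq (h : IsDykstraSeq r C x₀ x I) (hqC : ∀ j < r, q ∈ C (j + 1))
    (hμ1 : ∀ i, 1 ≤ μ i) (hq : Tendsto (fun i => x (μ i) r) atTop (𝓝 q))
    (hsc : Tendsto (fun i => pathLength r x (μ i) * rowLength r x (μ i)) atTop (𝓝 0)) :
    Tendsto (fun i => pairing r x I q (μ i)) atTop (𝓝 0) := by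
  have hupper : Tendsto (fun i => ⟪x (μ i) r - x₀, q - x (μ i) r⟫
      + r * (pathLength r x (μ i) * rowLength r x (μ i))) atTop (𝓝 0) := by
    simpa using ((hq.sub (tendsto_const_nhds (x := x₀))).inner
      ((tendsto_const_nhds (x := q)).sub hq)).add (hsc.const_mul (r : ℝ))
  refine squeeze_zero (fun i => h.pairing_nonneg hqC _) (fun i => ?_) hupper
  linarith [(abs_le.1 (h.abs_pairing_sub_inner_le (hμ1 i) q)).2]

theorem tendsto_of_subseq (h : IsDykstraSeq r C x₀ x I) (hqC : ∀ j < r, q ∈ C (j + 1))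
    (hμ : StrictMono μ) (hμ1 : ∀ i, 1 ≤ μ i) (hq : Tendsto (fun i => x (μ i) r) atTop (𝓝 q))
    (hsc : Tendsto (fun i => pathLength r x (μ i) * rowLength r x (μ i)) atTop (𝓝 0)) :
    Tendsto (fun m => x m r) atTop (𝓝 q) := by
  set energy : ℕ → ℝ := fun m => ‖x₀ - q‖ ^ 2 - ∑ k ∈ range m, dissipation r x I k
  have hanti : Antitone energy := fun a b hab => sub_le_sub_left
    (sum_le_sum_of_subset_of_nonneg (range_mono hab) fun k _ _ => h.dissipation_nonneg k) _
  have henergy_subseq : Tendsto (energy ∘ μ) atTop (𝓝 0) := by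
    have hlim : Tendsto (fun i => ‖x (μ i) r - q‖ ^ 2 + 2 * pairing r x I q (μ i)) atTop (𝓝 0) := by
      simpa using ((tendsto_iff_norm_sub_tendsto_zero.1 hq).pow 2).add
        ((h.tendsto_pairing_subseq hqC hμ1 hq hsc).const_mul 2)
    refine hlim.congr fun i => ?_
    simp only [Function.comp, energy, ← h.energy_eq q, h.row_succ _ (hμ1 i)]
  have henergy := (tendsto_iff_tendsto_subseq_of_antitone hanti hμ.tendsto_atTop).2 henergy_subseq
  have hstart : Tendsto (fun m => x (m + 1) 0) atTop (𝓝 q) := by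
    refine tendsto_iff_norm_sub_tendsto_zero.2 (tendsto_zero_of_sq_tendsto_zero
      (fun _ => norm_nonneg _) (squeeze_zero (fun _ => sq_nonneg _) (fun m => ?_) henergy))
    linarith [h.energy_eq q m, h.pairing_nonneg hqC m]
  refine (tendsto_add_atTop_iff_nat 1).1 ((tendsto_add_atTop_iff_nat 1).2 hstart |>.congr ?_)
  exact fun m => h.row_succ (m + 1) (by omega)

end IsDykstraSeq

theorem stmt_14_general {n r : ℕ}
    (C : ℕ → Set (EuclideanSpace ℝ (Fin n)))
    (hCcl : ∀ i, 1 ≤ i → i ≤ r → IsClosed (C i))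
    (hCcv : ∀ i, 1 ≤ i → i ≤ r → Convex ℝ (C i))
    (hInt : (⋂ i ∈ Set.Icc 1 r, C i).Nonempty)
    (P : ℕ → EuclideanSpace ℝ (Fin n) → EuclideanSpace ℝ (Fin n))
    (hP : ∀ i, 1 ≤ i → i ≤ r → ∀ z, P i z ∈ C i ∧ ∀ w ∈ C i, dist z (P i z) ≤ dist z w)
    (x₀ : EuclideanSpace ℝ (Fin n))
    (x I : ℕ → ℕ → EuclideanSpace ℝ (Fin n))
    (hstart : x 1 0 = x₀)
    (hI0 : ∀ i, I 0 i = 0)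
    (hx : ∀ m, 1 ≤ m → ∀ i, 1 ≤ i → i ≤ r → x m i = P i (x m (i - 1) - I (m - 1) i))
    (hI : ∀ m, 1 ≤ m → ∀ i, 1 ≤ i → i ≤ r → I m i = x m i - (x m (i - 1) - I (m - 1) i))
    (hrow : ∀ m, 1 ≤ m → x (m + 1) 0 = x m r) :
    ∃ q ∈ ⋂ i ∈ Set.Icc 1 r, C i,
      (∀ w ∈ ⋂ i ∈ Set.Icc 1 r, C i, dist x₀ q ≤ dist x₀ w) ∧
      Tendsto (fun m => x m r) atTop (𝓝 q) := by
  have h := IsDykstraSeq.of_nearest hCcv hP hstart hI0 hx hI hrow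
  obtain ⟨y, hy⟩ := hInt
  simp only [mem_biInter_Icc_one_iff] at hy ⊢
  obtain ⟨q, μ, hμ, hμ1, hq, hsc⟩ := h.exists_subseq_tendsto hy
  have hqC := h.mem_of_subseq (fun j hj => hCcl (j + 1) (by omega) (by omega)) hμ1 hq
    (Dykstra.tendsto_rowLength_of_tendsto_pathLength_mul x hμ1 hsc)
  exact ⟨q, hqC,
    fun w hw => dist_le_of_inner_sub_nonpos (h.inner_sub_nonpos_of_subseq hμ1 hq hsc hw),
    h.tendsto_of_subseq hqC hμ hμ1 hq hsc⟩

theorem stmt_14 {n r : ℕ} (hr : 1 ≤ r)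
    (C : ℕ → Set (EuclideanSpace ℝ (Fin n)))
    (hCcl : ∀ i, 1 ≤ i → i ≤ r → IsClosed (C i))
    (hCcv : ∀ i, 1 ≤ i → i ≤ r → Convex ℝ (C i))
    (hInt : (⋂ i ∈ Set.Icc 1 r, C i).Nonempty)
    (P : ℕ → EuclideanSpace ℝ (Fin n) → EuclideanSpace ℝ (Fin n))
    (hP : ∀ i, 1 ≤ i → i ≤ r → ∀ z, P i z ∈ C i ∧ ∀ w ∈ C i, dist z (P i z) ≤ dist z w)
    (x₀ : EuclideanSpace ℝ (Fin n))
    (x I : ℕ → ℕ → EuclideanSpace ℝ (Fin n))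
    (hstart : x 1 0 = x₀)
    (hI0 : ∀ i, I 0 i = 0)
    (hx : ∀ m, 1 ≤ m → ∀ i, 1 ≤ i → i ≤ r → x m i = P i (x m (i - 1) - I (m - 1) i))
    (hI : ∀ m, 1 ≤ m → ∀ i, 1 ≤ i → i ≤ r → I m i = x m i - (x m (i - 1) - I (m - 1) i))
    (hrow : ∀ m, 1 ≤ m → x (m + 1) 0 = x m r) :
    ∃ q ∈ ⋂ i ∈ Set.Icc 1 r, C i,
      (∀ w ∈ ⋂ i ∈ Set.Icc 1 r, C i, dist x₀ q ≤ dist x₀ w) ∧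
      Tendsto (fun m => x m r) atTop (𝓝 q) :=
  stmt_14_general C hCcl hCcv hInt P hP x₀ x I hstart hI0 hx hI hrow
end
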